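/- arXiv:2408.10875 — 2 statements merged into one kernel-verified Lean document; each statement's English description precedes it below -/
import Mathlib

section
/- Let (I, J) be a pair of standard dyadic n-partitions such that γ^I_J preserves signs on E. Then S_R(I) and S_R(J) contain the same number of intervals of sign +1, and the same number of intervals of sign −1. -/
/-- `IsSD l r` means `[l, r]` is a standard dyadic interval
`[k/2^m, (k+1)/2^m] ⊆ [0,1]` with `m ≥ 0`, `0 ≤ k ≤ 2^m - 1`. -/
def IsSD (l r : ℚ) : Prop :=
  ∃ m k : ℕ, k < 2 ^ m ∧ l = (k : ℚ) / 2 ^ m ∧ r = ((k : ℚ) + 1) / 2 ^ m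

/-- A left standard dyadic interval: `[k/2^m, (k+1)/2^m]` with `m ≥ 1` and `k` even. -/
def IsLeftSD (l r : ℚ) : Prop :=
  ∃ m k : ℕ, 1 ≤ m ∧ k < 2 ^ m ∧ Even k ∧
    l = (k : ℚ) / 2 ^ m ∧ r = ((k : ℚ) + 1) / 2 ^ m

/-- A right standard dyadic interval: `[k/2^m, (k+1)/2^m]` with `m ≥ 1` and `k` odd;
by convention `[0,1]` is also regarded as a right standard dyadic interval. -/
def IsRightSD (l r : ℚ) : Prop :=
  (l = 0 ∧ r = 1) ∨
    ∃ m k : ℕ, 1 ≤ m ∧ k < 2 ^ m ∧ Odd k ∧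
      l = (k : ℚ) / 2 ^ m ∧ r = ((k : ℚ) + 1) / 2 ^ m

/-- The set `S` of all standard dyadic intervals, an interval `[l, r]` being
represented by the pair `(l, r)` of its endpoints. -/
def SDSet : Set (ℚ × ℚ) := {A | IsSD A.1 A.2}

/-- The conjugate `Ā` of a standard dyadic interval `A ≠ [0,1]`:
the adjacent standard dyadic interval of the same length, on the right of `A`
if `A` is left, and on the left of `A` if `A` is right. -/
noncomputable def conjSD (A : ℚ × ℚ) : ℚ × ℚ := by
  classical
  exact if IsLeftSD A.1 A.2 then (A.2, 2 * A.2 - A.1) else (2 * A.1 - A.2, A.1)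

/-- The union of two overlapping or adjacent closed intervals, as an interval:
from the smaller left endpoint to the larger right endpoint.  In particular
`sdJoin A (conjSD A)` represents the interval `A ∪ Ā`. -/
def sdJoin (A B : ℚ × ℚ) : ℚ × ℚ := (min A.1 B.1, max A.2 B.2)

/-- A standard dyadic `n`-partition of `[0,1]`: breakpoints
`0 = a_0 < a_1 < ... < a_n = 1` with every `[a_i, a_{i+1}]` a standard dyadic
interval. -/
structure SDPartition (n : ℕ) where
  pts : Fin (n + 1) → ℚ
  first : pts 0 = 0
  last : pts (Fin.last n) = 1
  mono : StrictMono pts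
  sd : ∀ i : Fin n, IsSD (pts i.castSucc) (pts i.succ)

/-- `S(I)`: the set of intervals `[a_i, a_j]` (`i < j`) with endpoints breakpoints
of `I` that are standard dyadic intervals. -/
def SIn {n : ℕ} (I : SDPartition n) : Set (ℚ × ℚ) :=
  {A | (∃ i j : Fin (n + 1), i < j ∧ A = (I.pts i, I.pts j)) ∧ IsSD A.1 A.2}

/-- The midpoint of an interval. -/
def midQ (A : ℚ × ℚ) : ℚ := (A.1 + A.2) / 2

/-- The length of an interval. -/
def lenQ (A : ℚ × ℚ) : ℚ := A.2 - A.1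

/-- `E`: the set of dyadic rationals strictly between 0 and 1. -/
def Edyadic : Set ℚ := {q | ∃ m k : ℕ, 1 ≤ k ∧ k < 2 ^ m ∧ q = (k : ℚ) / 2 ^ m}

/-- `S_L(I) = S(I) ∩ S_L`. -/
def SLIn {n : ℕ} (I : SDPartition n) : Set (ℚ × ℚ) := {A ∈ SIn I | IsLeftSD A.1 A.2}

/-- `S_R(I) = S(I) ∩ S_R`. -/
def SRIn {n : ℕ} (I : SDPartition n) : Set (ℚ × ℚ) := {A ∈ SIn I | IsRightSD A.1 A.2}

/-- `M(I)`: the set of midpoints of the subintervals of `I`. -/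
def MIn {n : ℕ} (I : SDPartition n) : Set ℚ :=
  {q | ∃ i : Fin n, q = midQ (I.pts i.castSucc, I.pts i.succ)}

/-- `E(I)`: the union of `M(I)` with the breakpoints of `I` other than 0 and 1. -/
def EIn {n : ℕ} (I : SDPartition n) : Set ℚ :=
  MIn I ∪ {q | (∃ i : Fin (n + 1), I.pts i = q) ∧ q ≠ 0 ∧ q ≠ 1}

/-- `SignSpec s` says that `s` takes values in `{+1, -1}` on standard dyadic
intervals, `s([0,1]) = +1`, and for `A ≠ [0,1]`, `s A = s (A ∪ Ā)` if `A` is a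
left interval while `s A = - s (A ∪ Ā)` if `A` is a right interval. -/
def SignSpec (s : ℚ × ℚ → ℤ) : Prop :=
  (∀ A ∈ SDSet, s A = 1 ∨ s A = -1) ∧
  s ((0 : ℚ), (1 : ℚ)) = 1 ∧
  ∀ A ∈ SDSet, A ≠ ((0 : ℚ), (1 : ℚ)) →
    (IsLeftSD A.1 A.2 → s A = s (sdJoin A (conjSD A))) ∧
    (IsRightSD A.1 A.2 → s A = - s (sdJoin A (conjSD A)))

/-- `IsGamma I J γ` says that `γ = γ^I_J`: the piecewise linear map sending the
`i`-th breakpoint of `I` to the `i`-th breakpoint of `J` and linear on each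
subinterval of `I`. -/
def IsGamma {n : ℕ} (I J : SDPartition n) (γ : ℚ → ℚ) : Prop :=
  ∀ i : Fin n, ∀ x : ℚ, I.pts i.castSucc ≤ x → x ≤ I.pts i.succ →
    γ x = J.pts i.castSucc +
      (J.pts i.succ - J.pts i.castSucc) / (I.pts i.succ - I.pts i.castSucc) *
        (x - I.pts i.castSucc)

/-- `γ` preserves signs on `E`: `γ(E) = E` and every `e ∈ E` has the same sign
as `γ e`, where the sign of a point of `E` is the sign of the unique standard
dyadic interval having it as midpoint. -/
def PreservesSigns (s : ℚ × ℚ → ℤ) (γ : ℚ → ℚ) : Prop :=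
  γ '' Edyadic = Edyadic ∧
  ∀ A B : ℚ × ℚ, A ∈ SDSet → B ∈ SDSet → γ (midQ A) = midQ B → s B = s A

/-! Every breakpoint `e ∉ {0, 1}` of a standard dyadic partition is the midpoint of a unique
s.d. interval `m⁻¹(e)`, and the right half of `m⁻¹(e)` is a right interval of `S(I)`, of sign
`-s(m⁻¹(e))`; apart from `[0,1]`, every right interval of `S(I)` arises in this way from exactly
one breakpoint. Since `γ^I_J` sends the `i`-th breakpoint of `I` to the `i`-th breakpoint of `J`
and preserves signs, the `i`-th breakpoints of `I` and `J` have the same sign, whence the counts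
agree. -/

section Dyadic

variable {k m : ℕ}

lemma padicValRat_two_odd_div_two_pow (hk : Odd k) (m : ℕ) :
    padicValRat 2 ((k : ℚ) / 2 ^ m) = -m := by
  have hk0 : (k : ℚ) ≠ 0 := by exact_mod_cast hk.pos.ne'
  have h2 : padicValRat 2 (2 : ℚ) = 1 := by exact_mod_cast padicValRat.self (p := 2) one_lt_two
  rw [padicValRat.div hk0 (by positivity), padicValRat.of_nat, padicValRat.pow, h2,
    padicValNat.eq_zero_of_not_dvd hk.not_two_dvd_nat]
  simp

lemma odd_div_two_pow_inj {k' m' : ℕ} (hk : Odd k) (hk' : Odd k')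
    (h : (k : ℚ) / 2 ^ m = k' / 2 ^ m') : k = k' ∧ m = m' := by
  have hm : m = m' := by
    have := congrArg (padicValRat 2) h
    rw [padicValRat_two_odd_div_two_pow hk, padicValRat_two_odd_div_two_pow hk'] at this
    omega
  subst hm
  exact ⟨by exact_mod_cast (div_left_inj' (by positivity)).1 h, rfl⟩

lemma midQ_sd (k m : ℕ) :
    midQ ((k : ℚ) / 2 ^ m, (k + 1) / 2 ^ m) = ((2 * k + 1 : ℕ) : ℚ) / 2 ^ (m + 1) := by
  rw [midQ, pow_succ]
  push_cast
  ring

lemma midQ_injOn_sdSet : Set.InjOn midQ SDSet := by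
  rintro ⟨a, b⟩ ⟨m, k, -, rfl, rfl⟩ ⟨a', b'⟩ ⟨m', k', -, rfl, rfl⟩ h
  obtain ⟨hk, hm⟩ := odd_div_two_pow_inj (odd_two_mul_add_one k) (odd_two_mul_add_one k')
    ((midQ_sd k m).symm.trans (h.trans (midQ_sd k' m')))
  obtain rfl : k = k' := by omega
  obtain rfl : m = m' := by omega
  rfl

lemma exists_odd_div_two_pow (hk : k ≠ 0) (hkm : k < 2 ^ m) :
    ∃ k' m' : ℕ, Odd k' ∧ k' < 2 ^ m' ∧ (k : ℚ) / 2 ^ m = k' / 2 ^ m' := by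
  obtain ⟨e, j, hj, rfl⟩ := Nat.exists_eq_two_pow_mul_odd hk
  have he : e ≤ m :=
    ((Nat.pow_lt_pow_iff_right one_lt_two).1
      ((Nat.le_mul_of_pos_right _ hj.pos).trans_lt hkm)).le
  obtain ⟨d, rfl⟩ := Nat.exists_eq_add_of_le he
  rw [pow_add] at hkm
  refine ⟨j, d, hj, Nat.lt_of_mul_lt_mul_left hkm, ?_⟩
  push_cast
  rw [pow_add]
  field_simp

lemma div_two_pow_add_le_div_two_pow_iff (a b m d : ℕ) :
    (a : ℚ) / 2 ^ (m + d) ≤ b / 2 ^ m ↔ a ≤ b * 2 ^ d := by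
  rw [div_le_div_iff₀ (by positivity) (by positivity), pow_add, mul_comm (2 ^ m : ℚ),
    ← mul_assoc, mul_le_mul_iff_of_pos_right (by positivity)]
  norm_cast

lemma div_two_pow_add_lt_div_two_pow_iff (a b m d : ℕ) :
    (a : ℚ) / 2 ^ (m + d) < b / 2 ^ m ↔ a < b * 2 ^ d := by
  rw [div_lt_div_iff₀ (by positivity) (by positivity), pow_add, mul_comm (2 ^ m : ℚ),
    ← mul_assoc, mul_lt_mul_iff_of_pos_right (by positivity)]
  norm_cast

lemma IsSD.right_le_of_odd (hk : Odd k) {l r : ℚ} (hlr : IsSD l r)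
    (hkl : (k : ℚ) / 2 ^ m ≤ l) (hlk : l < (k + 1) / 2 ^ m) : r ≤ (k + 1) / 2 ^ m := by
  obtain ⟨m', k', -, rfl, rfl⟩ := hlr
  rcases le_or_gt m m' with hmm | hmm
  · obtain ⟨d, rfl⟩ := Nat.exists_eq_add_of_le hmm
    have := (div_two_pow_add_lt_div_two_pow_iff k' (k + 1) m d).1 (by exact_mod_cast hlk)
    exact_mod_cast (div_two_pow_add_le_div_two_pow_iff (k' + 1) (k + 1) m d).2 this
  · obtain ⟨d, rfl⟩ : ∃ d, m = m' + (d + 1) := ⟨m - m' - 1, by omega⟩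
    have h1 := (div_two_pow_add_le_div_two_pow_iff k k' m' (d + 1)).1 (by exact_mod_cast hkl)
    have h2 := (div_two_pow_add_le_div_two_pow_iff (k + 1) k' m' (d + 1)).not.1
      (by exact_mod_cast hlk.not_ge)
    have : Even k := ⟨k' * 2 ^ d, by rw [pow_succ, ← mul_assoc] at h1 h2; omega⟩
    exact absurd hk (Nat.not_odd_iff_even.2 this)

end Dyadic

namespace SDPartition

lemma pos {n : ℕ} (K : SDPartition n) : 0 < n := by
  have h : (0 : Fin (n + 1)) ≠ Fin.last n := fun h =>
    zero_ne_one (K.first.symm.trans (h ▸ K.last))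
  exact Nat.pos_of_ne_zero fun hn => h (Fin.ext (by simp [hn]))

variable {n : ℕ} (K : SDPartition n)

lemma pts_pos {i : Fin (n + 1)} (hi : i ≠ 0) : 0 < K.pts i :=
  K.first ▸ K.mono (Fin.pos_of_ne_zero hi)

lemma exists_pts_eq_odd_div {i : Fin (n + 1)} (h0 : i ≠ 0) (hl : i ≠ Fin.last n) :
    ∃ k m : ℕ, Odd k ∧ k < 2 ^ m ∧ K.pts i = k / 2 ^ m := by
  obtain ⟨i, rfl⟩ := Fin.exists_castSucc_eq.2 hl
  obtain ⟨m, k, hkm, hpk, -⟩ := K.sd i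
  have hk : k ≠ 0 := by
    rintro rfl
    simpa [hpk] using K.pts_pos h0
  rw [hpk]
  exact exists_odd_div_two_pow hk hkm

lemma exists_pts_eq_succ_div {i : Fin (n + 1)} {k m : ℕ} (hk : Odd k) (hkm : k < 2 ^ m)
    (hi : K.pts i = k / 2 ^ m) : ∃ j, i < j ∧ K.pts j = (k + 1) / 2 ^ m := by
  set t : ℚ := (k + 1) / 2 ^ m
  have hit : K.pts i < t := by
    rw [hi]
    exact div_lt_div_of_pos_right (lt_add_one _) (by positivity)
  have ht1 : t ≤ 1 := by
    rw [div_le_one (by positivity)]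
    exact_mod_cast hkm
  -- the subinterval ending at the first breakpoint `≥ t` starts in `[k/2^m, t)`
  obtain ⟨j, hjt, hmin⟩ :=
    wellFounded_lt.has_min {j | t ≤ K.pts j} ⟨Fin.last n, by simpa [K.last]⟩
  have hij : i < j := K.mono.lt_iff_lt.1 (hit.trans_le hjt)
  obtain ⟨j, rfl⟩ := Fin.exists_succ_eq.2 (Fin.ne_zero_of_lt hij)
  have hjt' : K.pts j.castSucc < t := not_le.1 fun h => hmin _ h Fin.castSucc_lt_succ
  have hkj : (k : ℚ) / 2 ^ m ≤ K.pts j.castSucc :=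
    hi ▸ K.mono.monotone (Fin.le_castSucc_iff.2 hij)
  exact ⟨_, hij, le_antisymm ((K.sd j).right_le_of_odd hk hkj hjt') hjt⟩

end SDPartition

lemma IsGamma.apply_pts {n : ℕ} {I J : SDPartition n} {γ : ℚ → ℚ} (hγ : IsGamma I J γ)
    {i : Fin (n + 1)} (hl : i ≠ Fin.last n) : γ (I.pts i) = J.pts i := by
  obtain ⟨i, rfl⟩ := Fin.exists_castSucc_eq.2 hl
  simpa using hγ i _ le_rfl (I.mono Fin.castSucc_lt_succ).le

section Sign

variable {k m : ℕ}

lemma one_le_of_odd_of_lt_two_pow (hk : Odd k) (hkm : k < 2 ^ m) : 1 ≤ m := by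
  refine Nat.one_le_iff_ne_zero.2 fun hm => ?_
  subst hm
  have := hk.pos
  omega

lemma parent_mem_sdSet (hk : Odd k) (hkm : k < 2 ^ m) :
    (((k : ℚ) - 1) / 2 ^ m, ((k : ℚ) + 1) / 2 ^ m) ∈ SDSet := by
  obtain ⟨t, rfl⟩ := hk
  obtain ⟨m, rfl⟩ := Nat.exists_eq_add_of_le' (one_le_of_odd_of_lt_two_pow ⟨t, rfl⟩ hkm)
  rw [pow_succ] at hkm
  refine ⟨m, t, by omega, ?_, ?_⟩ <;> · push_cast; rw [pow_succ]; field_simp; ring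

lemma midQ_parent (k m : ℕ) : midQ (((k : ℚ) - 1) / 2 ^ m, (k + 1) / 2 ^ m) = k / 2 ^ m := by
  rw [midQ]
  ring

lemma not_isLeftSD_of_odd (hk : Odd k) : ¬ IsLeftSD ((k : ℚ) / 2 ^ m) ((k + 1) / 2 ^ m) := by
  rintro ⟨m', k', -, -, hk', hl, hr⟩
  have hm : m = m' := by
    have h : ((2 : ℚ) ^ m)⁻¹ = (2 ^ m')⁻¹ := by linear_combination hr - hl
    exact pow_right_injective₀ two_pos (by norm_num) (inv_inj.1 h)
  subst hm
  have : k = k' := by exact_mod_cast (div_left_inj' (by positivity)).1 hl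
  exact Nat.not_odd_iff_even.2 hk' (this ▸ hk)

lemma SignSpec.sign_right_of_odd {s : ℚ × ℚ → ℤ} (hs : SignSpec s) (hk : Odd k)
    (hkm : k < 2 ^ m) :
    s ((k : ℚ) / 2 ^ m, (k + 1) / 2 ^ m) = - s (((k : ℚ) - 1) / 2 ^ m, (k + 1) / 2 ^ m) := by
  have hne : ((k : ℚ) / 2 ^ m, ((k : ℚ) + 1) / 2 ^ m) ≠ (0, 1) := fun h => by
    have : (0 : ℚ) < k / 2 ^ m := by have := hk.pos; positivity
    exact this.ne' (congrArg Prod.fst h)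
  have hright : IsRightSD ((k : ℚ) / 2 ^ m) ((k + 1) / 2 ^ m) :=
    Or.inr ⟨m, k, one_le_of_odd_of_lt_two_pow hk hkm, hkm, hk, rfl, rfl⟩
  rw [(hs.2.2 _ ⟨m, k, hkm, rfl, rfl⟩ hne).2 hright, conjSD, if_neg (not_isLeftSD_of_odd hk),
    sdJoin]
  have hlow : 2 * ((k : ℚ) / 2 ^ m) - (k + 1) / 2 ^ m = (k - 1) / 2 ^ m := by ring
  rw [hlow, min_eq_right (div_le_div_of_nonneg_right (by linarith) (by positivity)),
    max_eq_left (div_le_div_of_nonneg_right (by linarith) (by positivity))]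

end Sign

open Classical in
/-- The inverse `m⁻¹ : E → S` of the midpoint map (with junk value `(0, 0)` off `E`). -/
noncomputable def sdOfMidpoint (q : ℚ) : ℚ × ℚ :=
  if h : ∃ A ∈ SDSet, midQ A = q then h.choose else (0, 0)

lemma sdOfMidpoint_midQ {A : ℚ × ℚ} (hA : A ∈ SDSet) : sdOfMidpoint (midQ A) = A := by
  have h : ∃ B ∈ SDSet, midQ B = midQ A := ⟨A, hA, rfl⟩
  rw [sdOfMidpoint, dif_pos h]
  exact midQ_injOn_sdSet h.choose_spec.1 hA h.choose_spec.2

lemma sdOfMidpoint_odd_div {k m : ℕ} (hk : Odd k) (hkm : k < 2 ^ m) :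
    sdOfMidpoint ((k : ℚ) / 2 ^ m) = (((k : ℚ) - 1) / 2 ^ m, ((k : ℚ) + 1) / 2 ^ m) := by
  rw [← sdOfMidpoint_midQ (parent_mem_sdSet hk hkm), midQ_parent]

noncomputable def rightHalf (q : ℚ) : ℚ × ℚ := (q, (sdOfMidpoint q).2)

lemma rightHalf_odd_div {k m : ℕ} (hk : Odd k) (hkm : k < 2 ^ m) :
    rightHalf ((k : ℚ) / 2 ^ m) = ((k : ℚ) / 2 ^ m, ((k : ℚ) + 1) / 2 ^ m) := by
  rw [rightHalf, sdOfMidpoint_odd_div hk hkm]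

def interiorBreakpointsOfSign {n : ℕ} (K : SDPartition n) (s : ℚ × ℚ → ℤ) (c : ℤ) :
    Set (Fin (n + 1)) :=
  {i | i ≠ 0 ∧ i ≠ Fin.last n ∧ s (sdOfMidpoint (K.pts i)) = c}

section Counting

variable {n : ℕ} (K : SDPartition n) {s : ℚ × ℚ → ℤ}

lemma zero_one_mem_SRIn : ((0 : ℚ), (1 : ℚ)) ∈ SRIn K :=
  ⟨⟨⟨0, Fin.last n, by simpa [Fin.lt_def] using K.pos, Prod.ext K.first.symm K.last.symm⟩,
    ⟨0, 0, one_pos, by simp, by simp⟩⟩, Or.inl ⟨rfl, rfl⟩⟩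

lemma rightHalf_pts_mem_SRIn (hs : SignSpec s) {c : ℤ} {i : Fin (n + 1)}
    (hi : i ∈ interiorBreakpointsOfSign K s (-c)) :
    rightHalf (K.pts i) ∈ {A ∈ SRIn K | s A = c} := by
  obtain ⟨h0, hl, hsc⟩ := hi
  obtain ⟨k, m, hk, hkm, hik⟩ := K.exists_pts_eq_odd_div h0 hl
  obtain ⟨j, hij, hjk⟩ := K.exists_pts_eq_succ_div hk hkm hik
  rw [hik, sdOfMidpoint_odd_div hk hkm] at hsc
  rw [hik, rightHalf_odd_div hk hkm]
  refine ⟨⟨⟨⟨i, j, hij, by rw [hik, hjk]⟩, m, k, hkm, rfl, rfl⟩,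
    Or.inr ⟨m, k, one_le_of_odd_of_lt_two_pow hk hkm, hkm, hk, rfl, rfl⟩⟩, ?_⟩
  rw [hs.sign_right_of_odd hk hkm, hsc, neg_neg]

lemma setOf_mem_SRIn_sign_eq (hs : SignSpec s) (c : ℤ) :
    {A ∈ SRIn K | s A = c} =
      (fun i => rightHalf (K.pts i)) '' interiorBreakpointsOfSign K s (-c) ∪
        {A | A = (0, 1) ∧ c = 1} := by
  refine subset_antisymm ?_ (Set.union_subset ?_ ?_)
  · rintro _ ⟨⟨⟨⟨i, j, hij, rfl⟩, -⟩, ⟨hi, hj⟩ | ⟨m, k, -, hkm, hk, hi, hj⟩⟩, hsc⟩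
    all_goals dsimp only at hi hj
    · have h01 : (K.pts i, K.pts j) = (0, 1) := Prod.ext hi hj
      rw [h01, hs.2.1] at hsc
      exact Or.inr ⟨h01, hsc.symm⟩
    · have hR : (K.pts i, K.pts j) = rightHalf (K.pts i) := by
        rw [hi, rightHalf_odd_div hk hkm, ← hi, ← hj]
      have hi0 : i ≠ 0 := by
        rintro rfl
        have : (0 : ℚ) < k / 2 ^ m := by have := hk.pos; positivity
        exact this.ne' (K.first ▸ hi.symm)
      refine Or.inl ⟨i, ⟨hi0, (hij.trans_le (Fin.le_last j)).ne, ?_⟩, hR.symm⟩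
      rw [← hsc, hR, hi, rightHalf_odd_div hk hkm, hs.sign_right_of_odd hk hkm,
        sdOfMidpoint_odd_div hk hkm, neg_neg]
  · rintro _ ⟨i, hi, rfl⟩
    exact rightHalf_pts_mem_SRIn K hs hi
  · rintro _ ⟨rfl, rfl⟩
    exact ⟨zero_one_mem_SRIn K, hs.2.1⟩

lemma ncard_setOf_mem_SRIn_sign (hs : SignSpec s) (c : ℤ) :
    {A ∈ SRIn K | s A = c}.ncard =
      (interiorBreakpointsOfSign K s (-c)).ncard + {A : ℚ × ℚ | A = (0, 1) ∧ c = 1}.ncard := by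
  have hinj : Function.Injective fun i => rightHalf (K.pts i) :=
    fun i j h => K.mono.injective (congrArg Prod.fst h)
  have hdisj : Disjoint ((fun i => rightHalf (K.pts i)) '' interiorBreakpointsOfSign K s (-c))
      {A : ℚ × ℚ | A = (0, 1) ∧ c = 1} := by
    rw [Set.disjoint_right]
    rintro _ ⟨rfl, -⟩ ⟨i, ⟨hi0, -⟩, hi⟩
    exact (K.pts_pos hi0).ne' (congrArg Prod.fst hi)
  have hfin : {A : ℚ × ℚ | A = (0, 1) ∧ c = 1}.Finite :=
    (Set.finite_singleton _).subset fun A hA => hA.1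
  rw [setOf_mem_SRIn_sign_eq K hs, Set.ncard_union_eq hdisj (Set.toFinite _) hfin,
    Set.ncard_image_of_injective _ hinj]

end Counting

lemma interiorBreakpointsOfSign_eq {n : ℕ} {I J : SDPartition n} {s : ℚ × ℚ → ℤ} {γ : ℚ → ℚ}
    (hγ : IsGamma I J γ) (hpres : PreservesSigns s γ) (c : ℤ) :
    interiorBreakpointsOfSign I s c = interiorBreakpointsOfSign J s c := by
  have hsign : ∀ i, i ≠ 0 → i ≠ Fin.last n →
      s (sdOfMidpoint (J.pts i)) = s (sdOfMidpoint (I.pts i)) := by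
    intro i h0 hl
    obtain ⟨k, m, hk, hkm, hI⟩ := I.exists_pts_eq_odd_div h0 hl
    obtain ⟨k', m', hk', hkm', hJ⟩ := J.exists_pts_eq_odd_div h0 hl
    rw [hI, hJ, sdOfMidpoint_odd_div hk hkm, sdOfMidpoint_odd_div hk' hkm']
    refine hpres.2 _ _ (parent_mem_sdSet hk hkm) (parent_mem_sdSet hk' hkm') ?_
    rw [midQ_parent, midQ_parent, ← hI, ← hJ, hγ.apply_pts hl]
  ext i
  refine and_congr_right fun h0 => and_congr_right fun hl => ?_
  rw [hsign i h0 hl]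

/-- if `γ^I_J` preserves signs on `E`, then `S_R(I)` and `S_R(J)`
contain the same number of intervals of sign `+1` and the same number of
intervals of sign `-1`. -/
theorem statement_17 {n : ℕ} (I J : SDPartition n) (s : ℚ × ℚ → ℤ)
    (hs : SignSpec s) (γ : ℚ → ℚ) (hγ : IsGamma I J γ)
    (hpres : PreservesSigns s γ) :
    ({A ∈ SRIn I | s A = 1}).ncard = ({A ∈ SRIn J | s A = 1}).ncard ∧
    ({A ∈ SRIn I | s A = -1}).ncard = ({A ∈ SRIn J | s A = -1}).ncard := by
  constructor <;>
    rw [ncard_setOf_mem_SRIn_sign I hs, ncard_setOf_mem_SRIn_sign J hs,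
      interiorBreakpointsOfSign_eq hγ hpres]
end

section
/- Let I be a standard dyadic partition of [0,1]. Then the map A ↦ A ∪ Ā is a bijection from {A ∈ S_R(I) : A ≠ [0,1] and s(A) = +1} onto {B ∈ S(I) : s(B) = −1 and B is not a subinterval of I}. -/
/-!
Standard dyadic intervals are nested or have disjoint interiors, and no breakpoint of `I` lies
inside a piece of `I`. So if a breakpoint lies strictly inside a standard dyadic interval `J`,
the piece of `I` starting at or just before the left endpoint (resp. the midpoint) of `J` is
strictly shorter than `J`, hence lies in `J` (resp. in its right half): the left endpoint and the
midpoint of `J` are breakpoints. For a right interval `A ∈ S(I)`, `A ∪ Ā` has the left endpoint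
of `A` in its interior, so it lies in `S(I)` and is not a piece; conversely an element `B` of
`S(I)` that is not a piece has a breakpoint in its interior, so its right half lies in `S(I)`
and is the preimage of `B`. The signs match since `s(A ∪ Ā) = -s(A)` for right `A`.
-/

lemma IsSD.lt {l r : ℚ} (h : IsSD l r) : l < r := by
  obtain ⟨m, k, -, rfl, rfl⟩ := h
  gcongr; linarith

lemma IsSD.nonneg {l r : ℚ} (h : IsSD l r) : 0 ≤ l := by
  obtain ⟨m, k, -, rfl, -⟩ := h
  positivity

lemma IsSD.le_one {l r : ℚ} (h : IsSD l r) : r ≤ 1 := by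
  obtain ⟨m, k, hk, -, rfl⟩ := h
  rw [div_le_one (by positivity)]
  exact_mod_cast hk

lemma IsSD.nested_of_sub_le {l r l' r' : ℚ} (h : IsSD l r) (h' : IsSD l' r')
    (hlen : r - l ≤ r' - l') (hl : l < r') (hr : l' < r) : l' ≤ l ∧ r ≤ r' := by
  obtain ⟨m, k, -, rfl, rfl⟩ := h
  obtain ⟨m', k', -, rfl, rfl⟩ := h'
  have hm : m' ≤ m := by
    have : ((2:ℚ) ^ m)⁻¹ ≤ ((2:ℚ) ^ m')⁻¹ := by
      convert hlen using 1 <;> field_simp <;> ring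
    rw [inv_le_inv₀ (by positivity) (by positivity)] at this
    exact (pow_le_pow_iff_right₀ (by norm_num)).mp this
  obtain ⟨d, rfl⟩ := Nat.exists_eq_add_of_le hm
  have h2 : (0:ℚ) < 2 ^ m' := by positivity
  have h2d : (0:ℚ) < 2 ^ d := by positivity
  rw [pow_add, div_lt_div_iff₀ (mul_pos h2 h2d) h2] at hl
  rw [pow_add, div_lt_div_iff₀ h2 (mul_pos h2 h2d)] at hr
  simp only [pow_add, div_le_div_iff₀ (mul_pos h2 h2d) h2, div_le_div_iff₀ h2 (mul_pos h2 h2d)]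
  have hl' : k < (k' + 1) * 2 ^ d := by
    have : (k : ℚ) < (k' + 1) * 2 ^ d := by nlinarith
    exact_mod_cast this
  have hr' : k' * 2 ^ d < k + 1 := by
    have : (k' : ℚ) * 2 ^ d < k + 1 := by nlinarith
    exact_mod_cast this
  have hk₁ : k' * 2 ^ d ≤ k := by omega
  have hk₂ : k + 1 ≤ (k' + 1) * 2 ^ d := by omega
  constructor
  · have : (k' : ℚ) * 2 ^ d ≤ k := by exact_mod_cast hk₁
    nlinarith
  · have : (k : ℚ) + 1 ≤ (k' + 1) * 2 ^ d := by exact_mod_cast hk₂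
    nlinarith

lemma IsSD.two_mul_sub_le_of_sub_lt {l r l' r' : ℚ} (h : IsSD l r) (h' : IsSD l' r')
    (hlen : r - l < r' - l') : 2 * (r - l) ≤ r' - l' := by
  obtain ⟨m, k, -, rfl, rfl⟩ := h
  obtain ⟨m', k', -, rfl, rfl⟩ := h'
  have key : ∀ p j : ℕ, ((j : ℚ) + 1) / 2 ^ p - j / 2 ^ p = (2 ^ p)⁻¹ := by
    intro p j; field_simp; ring
  rw [key, key] at hlen ⊢
  rw [inv_lt_inv₀ (by positivity) (by positivity),
    pow_lt_pow_iff_right₀ (by norm_num)] at hlen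
  calc 2 * ((2:ℚ) ^ m)⁻¹ = ((2:ℚ) ^ (m - 1))⁻¹ := by
        rw [← pow_sub_one_mul (by omega : m ≠ 0) (2:ℚ)]; field_simp
    _ ≤ ((2:ℚ) ^ m')⁻¹ := by
        gcongr
        · norm_num
        · omega

lemma IsRightSD.isSD {l r : ℚ} (h : IsRightSD l r) : IsSD l r := by
  rcases h with ⟨rfl, rfl⟩ | ⟨m, k, -, hk, -, hl, hr⟩
  · exact ⟨0, 0, by norm_num, by norm_num, by norm_num⟩
  · exact ⟨m, k, hk, hl, hr⟩

lemma IsSD.isRightSD_midpoint {l r : ℚ} (h : IsSD l r) : IsRightSD ((l + r) / 2) r := by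
  obtain ⟨m, k, hk, rfl, rfl⟩ := h
  refine Or.inr ⟨m + 1, 2 * k + 1, by omega, by rw [pow_succ]; omega, odd_two_mul_add_one k,
    ?_, ?_⟩ <;> · push_cast; field_simp; ring

lemma IsRightSD.isSD_parent {l r : ℚ} (h : IsRightSD l r) (hne : (l, r) ≠ (0, 1)) :
    IsSD (2 * l - r) r := by
  rcases h with ⟨rfl, rfl⟩ | ⟨m, k, hm, hk, ⟨a, rfl⟩, rfl, rfl⟩
  · exact absurd rfl hne
  obtain ⟨p, rfl⟩ := Nat.exists_eq_add_of_le' hm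
  refine ⟨p, a, by rw [pow_succ] at hk; omega, ?_, ?_⟩ <;> · push_cast; field_simp; ring

lemma IsRightSD.not_isLeftSD {l r : ℚ} (h : IsRightSD l r) (hne : (l, r) ≠ (0, 1)) :
    ¬ IsLeftSD l r := by
  rcases h with ⟨rfl, rfl⟩ | ⟨m, k, -, -, hk, rfl, rfl⟩
  · exact absurd rfl hne
  rintro ⟨m', k', -, -, hk', hl, hr⟩
  have hm : m = m' := by
    have : ((2:ℚ) ^ m)⁻¹ = ((2:ℚ) ^ m')⁻¹ := by
      have := congrArg₂ (· - ·) hr hl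
      field_simp at this ⊢
      linarith
    exact Nat.pow_right_injective le_rfl (by exact_mod_cast inv_injective this)
  subst hm
  have : k = k' := by
    have := hl
    field_simp at this
    exact_mod_cast this
  subst this
  exact Nat.not_even_iff_odd.mpr hk hk'

lemma sdJoin_conjSD_of_isRightSD {A : ℚ × ℚ} (h : IsRightSD A.1 A.2) (hne : A ≠ (0, 1)) :
    sdJoin A (conjSD A) = (2 * A.1 - A.2, A.2) := by
  have hlr := h.isSD.lt
  rw [conjSD, if_neg (h.not_isLeftSD hne), sdJoin]
  dsimp only
  rw [min_eq_right (by linarith), max_eq_left hlr.le]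

lemma SignSpec.sign_sdJoin_conjSD_of_isRightSD {s : ℚ × ℚ → ℤ} (hs : SignSpec s)
    {A : ℚ × ℚ} (h : IsRightSD A.1 A.2) (hne : A ≠ (0, 1)) :
    s (sdJoin A (conjSD A)) = - s A := by
  rw [(hs.2.2 A h.isSD hne).2 h, neg_neg]

lemma injOn_sdJoin_conjSD :
    Set.InjOn (fun A => sdJoin A (conjSD A))
      {A | IsRightSD A.1 A.2 ∧ A ≠ ((0 : ℚ), (1 : ℚ))} := by
  rintro A ⟨hA, hAne⟩ A' ⟨hA', hA'ne⟩ h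
  simp only [sdJoin_conjSD_of_isRightSD hA hAne, sdJoin_conjSD_of_isRightSD hA' hA'ne,
    Prod.mk.injEq] at h
  exact Prod.ext (by linarith) h.2

namespace SDPartition

variable {n : ℕ} (I : SDPartition n)

lemma exists_piece_mem {y : ℚ} (hy₀ : 0 ≤ y) (hy₁ : y < 1) :
    ∃ i : Fin n, I.pts i.castSucc ≤ y ∧ y < I.pts i.succ := by
  classical
  set S := Finset.univ.filter fun j => y < I.pts j
  have hS : ∀ j, j ∈ S ↔ y < I.pts j := by simp [S]
  have hne : S.Nonempty := ⟨Fin.last n, (hS _).mpr (by rwa [I.last])⟩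
  have hj := (hS _).mp (S.min'_mem hne)
  have hj₀ : S.min' hne ≠ 0 := by
    rintro h
    rw [h, I.first] at hj
    linarith
  obtain ⟨i, hi⟩ := Fin.exists_succ_eq.mpr hj₀
  refine ⟨i, not_lt.mp fun h => ?_, hi ▸ hj⟩
  exact (hi ▸ i.castSucc_lt_succ).not_ge (S.min'_le _ ((hS _).mpr h))

lemma not_mem_Ioo_piece (i : Fin n) (j : Fin (n + 1)) :
    I.pts j ∉ Set.Ioo (I.pts i.castSucc) (I.pts i.succ) := by
  rintro ⟨h₁, h₂⟩
  rw [I.mono.lt_iff_lt, Fin.castSucc_lt_iff_succ_le] at h₁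
  exact (I.mono.lt_iff_lt.mp h₂).not_ge h₁

lemma exists_mem_Ioo_of_not_piece {i j : Fin (n + 1)} (hij : i < j)
    (h : ¬ ∃ c : Fin n, (I.pts i, I.pts j) = (I.pts c.castSucc, I.pts c.succ)) :
    ∃ k, I.pts k ∈ Set.Ioo (I.pts i) (I.pts j) := by
  have hi : i ≠ Fin.last n := (hij.trans_le (Fin.le_last j)).ne
  set c := i.castPred hi
  have hc : c.castSucc = i := Fin.castSucc_castPred i hi
  have hcj : c.succ ≤ j := Fin.castSucc_lt_iff_succ_le.mp (hc ▸ hij)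
  rcases hcj.lt_or_eq with hlt | heq
  · exact ⟨c.succ, I.mono (hc ▸ c.castSucc_lt_succ), I.mono hlt⟩
  · exact absurd ⟨c, by rw [hc, heq]⟩ h

variable {I} {l r : ℚ}

lemma sub_lt_of_mem_Ioo (hJ : IsSD l r) {x : ℚ} (hx : x ∈ Set.range I.pts) (hlx : l < x)
    (hxr : x < r) {i : Fin n} (hir : I.pts i.castSucc < r) (hli : l < I.pts i.succ) :
    I.pts i.succ - I.pts i.castSucc < r - l := by
  by_contra! hle
  obtain ⟨hil, hri⟩ := hJ.nested_of_sub_le (I.sd i) hle hli hir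
  obtain ⟨j, rfl⟩ := hx
  exact I.not_mem_Ioo_piece i j ⟨hil.trans_lt hlx, hxr.trans_le hri⟩

lemma left_mem_range_of_mem_Ioo (hJ : IsSD l r) {x : ℚ} (hx : x ∈ Set.range I.pts)
    (hlx : l < x) (hxr : x < r) : l ∈ Set.range I.pts := by
  obtain ⟨i, hil, hli⟩ := I.exists_piece_mem hJ.nonneg (hJ.lt.trans_le hJ.le_one)
  have hir := hil.trans_lt hJ.lt
  have hlen := sub_lt_of_mem_Ioo hJ hx hlx hxr hir hli
  obtain ⟨hli', -⟩ := (I.sd i).nested_of_sub_le hJ hlen.le hir hli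
  exact ⟨_, le_antisymm hil hli'⟩

lemma midpoint_mem_range_of_mem_Ioo (hJ : IsSD l r) {x : ℚ} (hx : x ∈ Set.range I.pts)
    (hlx : l < x) (hxr : x < r) : (l + r) / 2 ∈ Set.range I.pts := by
  have hl := hJ.nonneg
  have hlr := hJ.lt
  have hr := hJ.le_one
  obtain ⟨i, hic, hci⟩ := I.exists_piece_mem (y := (l + r) / 2) (by linarith) (by linarith)
  have hir : I.pts i.castSucc < r := by linarith
  have hli : l < I.pts i.succ := by linarith
  have hlen := (I.sd i).two_mul_sub_le_of_sub_lt hJ (sub_lt_of_mem_Ioo hJ hx hlx hxr hir hli)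
  obtain ⟨hci', -⟩ := (I.sd i).nested_of_sub_le hJ.isRightSD_midpoint.isSD
    (by linarith) hir hci
  exact ⟨_, le_antisymm hic hci'⟩

lemma mk_mem_SIn (hJ : IsSD l r) (hl : l ∈ Set.range I.pts) (hr : r ∈ Set.range I.pts) :
    (l, r) ∈ SIn I := by
  obtain ⟨i, rfl⟩ := hl
  obtain ⟨j, rfl⟩ := hr
  exact ⟨⟨i, j, I.mono.lt_iff_lt.mp hJ.lt, rfl⟩, hJ⟩

variable (I)

lemma mapsTo_sdJoin_conjSD {s : ℚ × ℚ → ℤ} (hs : SignSpec s) :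
    Set.MapsTo (fun A => sdJoin A (conjSD A))
      {A | A ∈ SRIn I ∧ A ≠ ((0 : ℚ), (1 : ℚ)) ∧ s A = 1}
      {B | B ∈ SIn I ∧ s B = -1 ∧
        ¬ ∃ i : Fin n, B = (I.pts i.castSucc, I.pts i.succ)} := by
  rintro A ⟨⟨⟨⟨i, j, -, rfl⟩, -⟩, hright⟩, hne, hsA⟩
  dsimp only at hright ⊢
  have hP := hright.isSD_parent hne
  have hlr := hright.isSD.lt
  have hin : 2 * I.pts i - I.pts j < I.pts i := by linarith
  refine ⟨?_, ?_, ?_⟩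
  · rw [sdJoin_conjSD_of_isRightSD hright hne]
    exact I.mk_mem_SIn hP (left_mem_range_of_mem_Ioo hP ⟨i, rfl⟩ hin hlr) ⟨j, rfl⟩
  · rw [hs.sign_sdJoin_conjSD_of_isRightSD hright hne, hsA]
  · rintro ⟨c, hc⟩
    rw [sdJoin_conjSD_of_isRightSD hright hne, Prod.mk.injEq] at hc
    exact I.not_mem_Ioo_piece c i (hc.1 ▸ hc.2 ▸ ⟨hin, hlr⟩)

lemma surjOn_sdJoin_conjSD {s : ℚ × ℚ → ℤ} (hs : SignSpec s) :
    Set.SurjOn (fun A => sdJoin A (conjSD A))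
      {A | A ∈ SRIn I ∧ A ≠ ((0 : ℚ), (1 : ℚ)) ∧ s A = 1}
      {B | B ∈ SIn I ∧ s B = -1 ∧
        ¬ ∃ i : Fin n, B = (I.pts i.castSucc, I.pts i.succ)} := by
  rintro B ⟨⟨⟨i, j, hij, rfl⟩, hB⟩, hsB, hnot⟩
  dsimp only at hB
  obtain ⟨k, hk⟩ := I.exists_mem_Ioo_of_not_piece hij hnot
  have hc := midpoint_mem_range_of_mem_Ioo hB ⟨k, rfl⟩ hk.1 hk.2
  have hright := hB.isRightSD_midpoint
  have hne : ((I.pts i + I.pts j) / 2, I.pts j) ≠ (0, 1) := by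
    have := hB.nonneg
    have := hB.lt
    rw [Ne, Prod.mk.injEq]
    intro h
    linarith [h.1]
  have hjoin := sdJoin_conjSD_of_isRightSD hright hne
  rw [show 2 * ((I.pts i + I.pts j) / 2) - I.pts j = I.pts i by ring] at hjoin
  refine ⟨_, ⟨⟨I.mk_mem_SIn hright.isSD hc ⟨j, rfl⟩, hright⟩, hne, ?_⟩, hjoin⟩
  have := hs.sign_sdJoin_conjSD_of_isRightSD hright hne
  rw [hjoin, hsB] at this
  omega

end SDPartition

/-- the map `A ↦ A ∪ Ā` is a bijection from
`{A ∈ S_R(I) : A ≠ [0,1], s A = +1}` onto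
`{B ∈ S(I) : s B = -1 and B is not a subinterval of I}`. -/
theorem statement_19 {n : ℕ} (I : SDPartition n) (s : ℚ × ℚ → ℤ)
    (hs : SignSpec s) :
    Set.BijOn (fun A => sdJoin A (conjSD A))
      {A | A ∈ SRIn I ∧ A ≠ ((0 : ℚ), (1 : ℚ)) ∧ s A = 1}
      {B | B ∈ SIn I ∧ s B = -1 ∧
        ¬ ∃ i : Fin n, B = (I.pts i.castSucc, I.pts i.succ)} :=
  ⟨I.mapsTo_sdJoin_conjSD hs, injOn_sdJoin_conjSD.mono fun _ hA => And.intro hA.1.2 hA.2.1,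
    I.surjOn_sdJoin_conjSD hs⟩
end
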